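/- arXiv:1608.01152 — 3 statements merged into one kernel-verified Lean document; each statement's English description precedes it below -/
import Mathlib

section
/- Let 0 → A → B →(φ) C →(ψ) D → E → 0 be an exact sequence of finitely generated abelian groups in which A is finite. Then |A| · |C_tor| · |coker(ψ_tor)| = |B_tor| · |D_tor|. -/
/-!
Restricting the sequence to torsion subgroups gives `0 → A → B_tor → C_tor → D_tor`, which is
still exact: if `c ∈ C_tor` lies in `ker ψ = φ(B)`, say `c = φ b` with `n • c = 0`, then
`n • b ∈ ker φ = α(A)` is torsion because `A` is finite, so `b` is torsion. Counting elements
along `B_tor → C_tor → D_tor → coker(ψ_tor)` with `|G| = |ker f| ⬝ |im f|` gives the identity.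
-/

open AddCommGroup

namespace AddMonoidHom

lemma card_eq_card_ker_mul_card_range {G H : Type*} [AddGroup G] [AddGroup H] (f : G →+ H) :
    Nat.card G = Nat.card f.ker * Nat.card f.range := by
  rw [← f.ker.card_mul_index, AddSubgroup.index_ker]

variable {G H K : Type*} [AddCommGroup G] [AddCommGroup H] [AddCommGroup K]

def torsionMap (f : G →+ H) : torsion G →+ torsion H :=
  (f.domRestrict (torsion G)).codRestrict (torsion H) fun x => f.isOfFinAddOrder x.2

@[simp]
lemma coe_torsionMap_apply (f : G →+ H) (x : torsion G) : (f.torsionMap x : H) = f x := rfl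

lemma ker_torsionMap (f : G →+ H) : f.torsionMap.ker = f.ker.addSubgroupOf (torsion G) :=
  (ker_codRestrict _ _ _).trans (ker_domRestrict _ _)

lemma range_torsionMap (f : G →+ H) :
    f.torsionMap.range = ((torsion G).map f).addSubgroupOf (torsion H) := by
  ext y
  simp only [mem_range, AddSubgroup.mem_addSubgroupOf, AddSubgroup.mem_map, Subtype.ext_iff,
    coe_torsionMap_apply, Subtype.exists, exists_prop]

lemma range_le_torsion [Finite G] (f : G →+ H) : f.range ≤ torsion H := by
  rintro _ ⟨x, rfl⟩
  exact f.isOfFinAddOrder (isOfFinAddOrder_of_finite x)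

lemma isOfFinAddOrder_of_map {f : G →+ H} (hf : f.ker ≤ torsion G) {x : G}
    (hx : IsOfFinAddOrder (f x)) : IsOfFinAddOrder x := by
  obtain ⟨n, hn, hnx⟩ := isOfFinAddOrder_iff_nsmul_eq_zero.mp hx
  have hker : n • x ∈ f.ker := by rw [mem_ker, map_nsmul, hnx]
  exact (isOfFinAddOrder_nsmul.mp (hf hker)).resolve_right hn.ne'

lemma card_ker_torsionMap {f : G →+ H} (hf : f.ker ≤ torsion G) :
    Nat.card f.torsionMap.ker = Nat.card f.ker := by
  rw [ker_torsionMap]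
  exact Nat.card_congr (AddSubgroup.addSubgroupOfEquivOfLe hf).toEquiv

lemma range_torsionMap_eq_ker {f : G →+ H} {g : H →+ K} (hfg : f.range = g.ker)
    (hf : f.ker ≤ torsion G) : f.torsionMap.range = g.torsionMap.ker := by
  ext y
  simp only [mem_range, mem_ker, Subtype.ext_iff, coe_torsionMap_apply, AddSubgroup.coe_zero]
  constructor
  · rintro ⟨x, hx⟩
    rw [← hx, ← mem_ker, ← hfg]
    exact ⟨x, rfl⟩
  · intro hy
    obtain ⟨x, hx⟩ : (y : H) ∈ f.range := hfg ▸ hy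
    exact ⟨⟨x, isOfFinAddOrder_of_map hf (hx ▸ y.2)⟩, hx⟩

end AddMonoidHom

open AddMonoidHom in
theorem stmt_0_general {A B C D : Type} [AddCommGroup A] [AddCommGroup B] [AddCommGroup C]
    [AddCommGroup D]
    [Finite A]
    (α : A →+ B) (φ : B →+ C) (ψ : C →+ D)
    (hα : Function.Injective α)
    (h1 : α.range = φ.ker) (h2 : φ.range = ψ.ker) :
    Nat.card A * Nat.card (AddCommGroup.torsion C) *
      Nat.card ((AddCommGroup.torsion D) ⧸
        (((AddCommGroup.torsion C).map ψ).addSubgroupOf (AddCommGroup.torsion D))) =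
    Nat.card (AddCommGroup.torsion B) * Nat.card (AddCommGroup.torsion D) := by
  have hφ : φ.ker ≤ torsion B := h1 ▸ α.range_le_torsion
  have hA : Nat.card φ.torsionMap.ker = Nat.card A := by
    rw [card_ker_torsionMap hφ, ← h1, Nat.card_congr (ofInjective hα).toEquiv]
  rw [← range_torsionMap, card_eq_card_ker_mul_card_range φ.torsionMap,
    card_eq_card_ker_mul_card_range ψ.torsionMap, ← range_torsionMap_eq_ker h2 hφ, hA,
    ← ψ.torsionMap.range.card_mul_index, AddSubgroup.index]
  ring

/-- Let `0 → A → B →(φ) C →(ψ) D → E → 0` be an exact sequence of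
finitely generated abelian groups in which `A` is finite. Then
`|A| ⬝ |C_tor| ⬝ |coker(ψ_tor)| = |B_tor| ⬝ |D_tor|`. -/
theorem stmt_0 {A B C D E : Type} [AddCommGroup A] [AddCommGroup B] [AddCommGroup C]
    [AddCommGroup D] [AddCommGroup E]
    [AddGroup.FG A] [AddGroup.FG B] [AddGroup.FG C] [AddGroup.FG D] [AddGroup.FG E]
    [Finite A]
    (α : A →+ B) (φ : B →+ C) (ψ : C →+ D) (ε : D →+ E)
    (hα : Function.Injective α) (hε : Function.Surjective ε)
    (h1 : α.range = φ.ker) (h2 : φ.range = ψ.ker) (h3 : ψ.range = ε.ker) :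
    Nat.card A * Nat.card (AddCommGroup.torsion C) *
      Nat.card ((AddCommGroup.torsion D) ⧸
        (((AddCommGroup.torsion C).map ψ).addSubgroupOf (AddCommGroup.torsion D))) =
    Nat.card (AddCommGroup.torsion B) * Nat.card (AddCommGroup.torsion D) :=
  stmt_0_general α φ ψ hα h1 h2
end

section
/- Consider a commutative diagram of finite-dimensional real vector spaces with exact rows (E_A): 0 → A₁ → A₂ → A₃ → 0, (E_B): 0 → B₁ → B₂ → B₃ → 0, (E_C): 0 → C₁ → C₂ → C₃ → 0 and exact columns (E_i): 0 → A_i → B_i → C_i → 0 for i = 1,2,3. Fix ordered bases of all nine spaces, and for each of the six short exact sequences choose an arbitrary ℝ-linear section of its surjection. Then |det θ(E₂)| · |det θ(E_A)| · |det θ(E_C)| = |det θ(E₁)| · |det θ(E₃)| · |det θ(E_B)|, where θ(E) denotes the isomorphism θ_s of the sequence E associated with its chosen section and determinants are taken with respect to the chosen bases. -/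
/-!
The determinant of `θ_s` does not depend on the section `s`: two sections differ by `f ∘ d`, which
changes `θ_s` by the unipotent factor `(u, w) ↦ (u + d w, w)`. So `s₂` and `s_B` may be replaced by
sections adapted to the diagram. Lift `s_C` and `s₃` to one map `t : C₃ → B₂`, let `s₂` be
`f_B ∘ s₁` on `f_C(C₁)` and `t` on `s_C(C₃)`, and let `s_B` be `p₂ ∘ s_A` on `p₃(A₃)` and `t` on
`s₃(C₃)`. Then `θ(E₂) ∘ (θ(E_A) × θ(E_C)) = θ(E_B) ∘ (θ(E₁) × θ(E₃)) ∘ τ`, with `τ` the shuffle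
`(A₁ × A₃) × (C₁ × C₃) ≃ (A₁ × C₁) × (A₃ × C₃)`. The reindexing of the basis of `B₂` absorbs `τ`,
so the identity holds even without absolute values.
-/

open LinearMap Matrix

namespace Function.Exact

variable {R U V W X : Type*} [Ring R] [AddCommGroup U] [AddCommGroup V] [AddCommGroup W]
  [AddCommGroup X] [Module R U] [Module R V] [Module R W] [Module R X]
  {f : U →ₗ[R] V} {g : V →ₗ[R] W}

theorem exists_comp_eq_of_comp_eq_zero (hfg : Exact f g) (hf : Injective f) {φ : X →ₗ[R] V}
    (hφ : g ∘ₗ φ = 0) : ∃ d : X →ₗ[R] U, f ∘ₗ d = φ := by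
  have hrange : ∀ x, φ x ∈ range f := fun x => (hfg (φ x)).mp congr($hφ x)
  exact ⟨(LinearEquiv.ofInjective f hf).symm ∘ₗ φ.codRestrict _ hrange, by ext; simp⟩

variable {s : W →ₗ[R] V}

theorem surjective_coprod_of_section (hfg : Exact f g) (hs : g ∘ₗ s = LinearMap.id) :
    Surjective (f.coprod s) := by
  intro v
  have hgs : g (s (g v)) = g v := congr($hs (g v))
  obtain ⟨u, hu⟩ := (hfg (v - s (g v))).mp (by rw [map_sub, hgs, sub_self])
  exact ⟨(u, g v), by simp [hu]⟩

theorem bijective_coprod_of_section (hfg : Exact f g) (hf : Injective f)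
    (hs : g ∘ₗ s = LinearMap.id) : Bijective (f.coprod s) :=
  (hfg.splitSurjectiveEquiv hf ⟨s, hs⟩).1.symm.bijective

theorem linearMap_ext_of_section (hfg : Exact f g) (hs : g ∘ₗ s = LinearMap.id)
    {h h' : V →ₗ[R] X} (hf' : h ∘ₗ f = h' ∘ₗ f) (hs' : h ∘ₗ s = h' ∘ₗ s) : h = h' := by
  rw [← cancel_right (hfg.surjective_coprod_of_section hs), comp_coprod, comp_coprod, hf', hs']

theorem exists_comp_eq_of_section (hfg : Exact f g) (hf : Injective f)
    (hs : g ∘ₗ s = LinearMap.id) (u : U →ₗ[R] X) (v : W →ₗ[R] X) :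
    ∃ h : V →ₗ[R] X, h ∘ₗ f = u ∧ h ∘ₗ s = v := by
  let e := LinearEquiv.ofBijective _ (hfg.bijective_coprod_of_section hf hs)
  have he : (u.coprod v ∘ₗ e.symm.toLinearMap) ∘ₗ f.coprod s = u.coprod v :=
    LinearMap.ext fun x => congrArg (u.coprod v) (e.symm_apply_apply x)
  refine ⟨u.coprod v ∘ₗ e.symm.toLinearMap, ?_, ?_⟩
  · have := congr($he ∘ₗ inl R U W)
    rwa [LinearMap.comp_assoc, coprod_inl, coprod_inl] at this
  · have := congr($he ∘ₗ inr R U W)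
    rwa [LinearMap.comp_assoc, coprod_inr, coprod_inr] at this

end Function.Exact

section Determinants

variable {R : Type*} [CommRing R]
  {M₁ M₂ M₃ M₄ N₁ N₂ N : Type*} [AddCommGroup M₁] [AddCommGroup M₂] [AddCommGroup M₃]
  [AddCommGroup M₄] [AddCommGroup N₁] [AddCommGroup N₂] [AddCommGroup N]
  [Module R M₁] [Module R M₂] [Module R M₃] [Module R M₄] [Module R N₁] [Module R N₂] [Module R N]
  {ι₁ ι₂ ι₃ ι₄ κ₁ κ₂ : Type*} [Fintype ι₁] [Fintype ι₂] [Fintype ι₃] [Fintype ι₄]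
  [Fintype κ₁] [Fintype κ₂] [DecidableEq ι₁] [DecidableEq ι₂] [DecidableEq ι₃] [DecidableEq ι₄]

theorem LinearMap.toMatrix_prodMap' (b₁ : Module.Basis ι₁ R M₁) (b₂ : Module.Basis ι₂ R M₂)
    (c₁ : Module.Basis κ₁ R N₁) (c₂ : Module.Basis κ₂ R N₂) (φ : M₁ →ₗ[R] N₁) (ψ : M₂ →ₗ[R] N₂) :
    toMatrix (b₁.prod b₂) (c₁.prod c₂) (φ.prodMap ψ) =
      fromBlocks (toMatrix b₁ c₁ φ) 0 0 (toMatrix b₂ c₂ ψ) := by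
  ext (i | i) (j | j) <;> simp [toMatrix_apply]

theorem LinearMap.det_toMatrix_comp_prodMap (b₁ : Module.Basis ι₁ R M₁)
    (b₂ : Module.Basis ι₂ R M₂) (c₁ : Module.Basis ι₁ R N₁) (c₂ : Module.Basis ι₂ R N₂)
    (c : Module.Basis (ι₁ ⊕ ι₂) R N) (Φ : N₁ × N₂ →ₗ[R] N) (φ : M₁ →ₗ[R] N₁) (ψ : M₂ →ₗ[R] N₂) :
    (toMatrix (b₁.prod b₂) c (Φ ∘ₗ φ.prodMap ψ)).det =
      (toMatrix (c₁.prod c₂) c Φ).det * ((toMatrix b₁ c₁ φ).det * (toMatrix b₂ c₂ ψ).det) := by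
  rw [toMatrix_comp _ (c₁.prod c₂), det_mul, toMatrix_prodMap', det_fromBlocks_zero₂₁]

theorem LinearMap.det_toMatrix_comp_prodProdProdComm (b₁ : Module.Basis ι₁ R M₁)
    (b₂ : Module.Basis ι₂ R M₂) (b₃ : Module.Basis ι₃ R M₃) (b₄ : Module.Basis ι₄ R M₄)
    (c : Module.Basis ((ι₁ ⊕ ι₂) ⊕ (ι₃ ⊕ ι₄)) R N) (Φ : (M₁ × M₃) × (M₂ × M₄) →ₗ[R] N) :
    (toMatrix ((b₁.prod b₂).prod (b₃.prod b₄)) c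
        (Φ ∘ₗ (LinearEquiv.prodProdProdComm R M₁ M₂ M₃ M₄).toLinearMap)).det =
      (toMatrix ((b₁.prod b₃).prod (b₂.prod b₄)) (c.reindex (Equiv.sumSumSumComm ι₁ ι₂ ι₃ ι₄))
        Φ).det := by
  set σ := Equiv.sumSumSumComm ι₁ ι₂ ι₃ ι₄
  set τ := LinearEquiv.prodProdProdComm R M₁ M₂ M₃ M₄
  have hτ : ∀ j, τ ((b₁.prod b₂).prod (b₃.prod b₄) j) = (b₁.prod b₃).prod (b₂.prod b₄) (σ j) := by
    rintro ((i | i) | (i | i)) <;> simp [σ, τ, Prod.ext_iff]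
  have : toMatrix ((b₁.prod b₂).prod (b₃.prod b₄)) c (Φ ∘ₗ τ.toLinearMap) =
      (toMatrix ((b₁.prod b₃).prod (b₂.prod b₄)) (c.reindex σ) Φ).submatrix σ σ := by
    ext i j
    simp only [toMatrix_apply, submatrix_apply, LinearMap.comp_apply, LinearEquiv.coe_coe, hτ,
      Module.Basis.repr_reindex_apply, Equiv.symm_apply_apply]
  rw [this, det_submatrix_equiv_self]

end Determinants

section SectionIndependence

variable {R U V W : Type*} [CommRing R] [AddCommGroup U] [AddCommGroup V] [AddCommGroup W]
  [Module R U] [Module R V] [Module R W] {ι κ : Type*} [Fintype ι] [Fintype κ] [DecidableEq ι]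
  [DecidableEq κ]

theorem LinearMap.det_toMatrix_coprod_eq_of_section (bU : Module.Basis ι R U)
    (bW : Module.Basis κ R W) (bV : Module.Basis (ι ⊕ κ) R V) {f : U →ₗ[R] V} {g : V →ₗ[R] W}
    {s s' : W →ₗ[R] V} (hfg : Function.Exact f g) (hf : Function.Injective f)
    (hs : g ∘ₗ s = LinearMap.id) (hs' : g ∘ₗ s' = LinearMap.id) :
    (toMatrix (bU.prod bW) bV (f.coprod s)).det = (toMatrix (bU.prod bW) bV (f.coprod s')).det := by
  obtain ⟨d, hd⟩ := hfg.exists_comp_eq_of_comp_eq_zero hf (φ := s - s')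
    (by rw [comp_sub, hs, hs', sub_self])
  let shear : U × W →ₗ[R] U × W := (fst R U W + d ∘ₗ snd R U W).prod (snd R U W)
  have hshear : f.coprod s = f.coprod s' ∘ₗ shear := by
    ext x
    · simp [shear]
    · have hdx : f (d x) = s x - s' x := congr($hd x)
      simp [shear, hdx]
  have hdet : (toMatrix (bU.prod bW) (bU.prod bW) shear).det = 1 := by
    have : toMatrix (bU.prod bW) (bU.prod bW) shear = fromBlocks 1 (toMatrix bW bU d) 0 1 := by
      ext (i | i) (j | j) <;> simp [toMatrix_apply, shear, Finsupp.single_apply, one_apply, eq_comm]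
    rw [this, det_fromBlocks_zero₂₁, det_one, det_one, one_mul]
  rw [hshear, toMatrix_comp _ (bU.prod bW), det_mul, hdet, mul_one]

end SectionIndependence

section NineDiagram

variable {R : Type*} [Ring R] {A₁ A₂ A₃ B₁ B₂ B₃ C₁ C₂ C₃ : Type*}
  [AddCommGroup A₁] [AddCommGroup A₂] [AddCommGroup A₃]
  [AddCommGroup B₁] [AddCommGroup B₂] [AddCommGroup B₃]
  [AddCommGroup C₁] [AddCommGroup C₂] [AddCommGroup C₃]
  [Module R A₁] [Module R A₂] [Module R A₃] [Module R B₁] [Module R B₂] [Module R B₃]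
  [Module R C₁] [Module R C₂] [Module R C₃]
  {fA : A₁ →ₗ[R] A₂} {gA : A₂ →ₗ[R] A₃} {fB : B₁ →ₗ[R] B₂} {gB : B₂ →ₗ[R] B₃}
  {fC : C₁ →ₗ[R] C₂} {gC : C₂ →ₗ[R] C₃} {p₁ : A₁ →ₗ[R] B₁} {q₁ : B₁ →ₗ[R] C₁}
  {p₂ : A₂ →ₗ[R] B₂} {q₂ : B₂ →ₗ[R] C₂} {p₃ : A₃ →ₗ[R] B₃} {q₃ : B₃ →ₗ[R] C₃}
  {sA : A₃ →ₗ[R] A₂} {sB : B₃ →ₗ[R] B₂} {sC : C₃ →ₗ[R] C₂} {s₁ : C₁ →ₗ[R] B₁}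
  {s₃ : C₃ →ₗ[R] B₃}

theorem exists_lift_of_sections (hsq₃ : q₂ ∘ₗ fB = fC ∘ₗ q₁) (hsq₄ : q₃ ∘ₗ gB = gC ∘ₗ q₂)
    (hgfB : gB ∘ₗ fB = 0) (hexC : Function.Exact fC gC) (hfC : Function.Injective fC)
    (hsB : gB ∘ₗ sB = LinearMap.id) (hsC : gC ∘ₗ sC = LinearMap.id)
    (hs₁ : q₁ ∘ₗ s₁ = LinearMap.id) (hs₃ : q₃ ∘ₗ s₃ = LinearMap.id) :
    ∃ t : C₃ →ₗ[R] B₂, q₂ ∘ₗ t = sC ∧ gB ∘ₗ t = s₃ := by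
  obtain ⟨d, hd⟩ := hexC.exists_comp_eq_of_comp_eq_zero hfC (φ := q₂ ∘ₗ sB ∘ₗ s₃ - sC) (by
    rw [comp_sub, hsC, ← LinearMap.comp_assoc, ← hsq₄, LinearMap.comp_assoc,
      ← LinearMap.comp_assoc s₃, hsB, id_comp, hs₃, sub_self])
  -- `sB ∘ s₃` already lifts `s₃`; subtracting `fB ∘ s₁ ∘ d` corrects its image in `C₂` to `sC`.
  refine ⟨sB ∘ₗ s₃ - fB ∘ₗ s₁ ∘ₗ d, ?_, ?_⟩
  · rw [comp_sub, ← LinearMap.comp_assoc (g := fB), hsq₃, LinearMap.comp_assoc,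
      ← LinearMap.comp_assoc (h := q₁), hs₁, id_comp, hd, sub_sub_cancel]
  · rw [comp_sub, ← LinearMap.comp_assoc, hsB, id_comp, ← LinearMap.comp_assoc (g := fB), hgfB,
      zero_comp, sub_zero]

theorem exists_sections_comp_prodMap_eq (hsq₁ : p₂ ∘ₗ fA = fB ∘ₗ p₁)
    (hsq₂ : p₃ ∘ₗ gA = gB ∘ₗ p₂) (hsq₃ : q₂ ∘ₗ fB = fC ∘ₗ q₁) (hsq₄ : q₃ ∘ₗ gB = gC ∘ₗ q₂)
    (hgfB : gB ∘ₗ fB = 0) (hexC : Function.Exact fC gC) (hfC : Function.Injective fC)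
    (hex₃ : Function.Exact p₃ q₃) (hp₃ : Function.Injective p₃)
    (hsA : gA ∘ₗ sA = LinearMap.id) (hsB : gB ∘ₗ sB = LinearMap.id)
    (hsC : gC ∘ₗ sC = LinearMap.id) (hs₁ : q₁ ∘ₗ s₁ = LinearMap.id)
    (hs₃ : q₃ ∘ₗ s₃ = LinearMap.id) :
    ∃ (s₂ : C₂ →ₗ[R] B₂) (sB' : B₃ →ₗ[R] B₂), q₂ ∘ₗ s₂ = LinearMap.id ∧
      gB ∘ₗ sB' = LinearMap.id ∧
      p₂.coprod s₂ ∘ₗ (fA.coprod sA).prodMap (fC.coprod sC) =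
        fB.coprod sB' ∘ₗ (p₁.coprod s₁).prodMap (p₃.coprod s₃) ∘ₗ
          (LinearEquiv.prodProdProdComm R A₁ A₃ C₁ C₃).toLinearMap := by
  obtain ⟨t, hq₂t, hgBt⟩ := exists_lift_of_sections hsq₃ hsq₄ hgfB hexC hfC hsB hsC hs₁ hs₃
  obtain ⟨s₂, hs₂f, hs₂s⟩ := hexC.exists_comp_eq_of_section hfC hsC (fB ∘ₗ s₁) t
  obtain ⟨sB', hsB'p, hsB's⟩ := hex₃.exists_comp_eq_of_section hp₃ hs₃ (p₂ ∘ₗ sA) t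
  refine ⟨s₂, sB', ?_, ?_, ?_⟩
  · apply hexC.linearMap_ext_of_section hsC
    · rw [LinearMap.comp_assoc, hs₂f, ← LinearMap.comp_assoc, hsq₃, LinearMap.comp_assoc, hs₁,
        comp_id, id_comp]
    · rw [LinearMap.comp_assoc, hs₂s, hq₂t, id_comp]
  · apply hex₃.linearMap_ext_of_section hs₃
    · rw [LinearMap.comp_assoc, hsB'p, ← LinearMap.comp_assoc, ← hsq₂, LinearMap.comp_assoc, hsA,
        comp_id, id_comp]
    · rw [LinearMap.comp_assoc, hsB's, hgBt, id_comp]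
  · have h₁ : ∀ x, p₂ (fA x) = fB (p₁ x) := fun x => congr($hsq₁ x)
    have h₂ : ∀ x, s₂ (fC x) = fB (s₁ x) := fun x => congr($hs₂f x)
    have h₃ : ∀ x, s₂ (sC x) = t x := fun x => congr($hs₂s x)
    have h₄ : ∀ x, sB' (p₃ x) = p₂ (sA x) := fun x => congr($hsB'p x)
    have h₅ : ∀ x, sB' (s₃ x) = t x := fun x => congr($hsB's x)
    ext x <;> simp [h₁, h₂, h₃, h₄, h₅]

end NineDiagram

theorem stmt_6_general {A₁ A₂ A₃ B₁ B₂ B₃ C₁ C₂ C₃ : Type}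
    [AddCommGroup A₁] [AddCommGroup A₂] [AddCommGroup A₃]
    [AddCommGroup B₁] [AddCommGroup B₂] [AddCommGroup B₃]
    [AddCommGroup C₁] [AddCommGroup C₂] [AddCommGroup C₃]
    [Module ℝ A₁] [Module ℝ A₂] [Module ℝ A₃]
    [Module ℝ B₁] [Module ℝ B₂] [Module ℝ B₃]
    [Module ℝ C₁] [Module ℝ C₂] [Module ℝ C₃]
    -- rows
    (fA : A₁ →ₗ[ℝ] A₂) (gA : A₂ →ₗ[ℝ] A₃)
    (fB : B₁ →ₗ[ℝ] B₂) (gB : B₂ →ₗ[ℝ] B₃)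
    (fC : C₁ →ₗ[ℝ] C₂) (gC : C₂ →ₗ[ℝ] C₃)
    -- columns
    (p₁ : A₁ →ₗ[ℝ] B₁) (q₁ : B₁ →ₗ[ℝ] C₁)
    (p₂ : A₂ →ₗ[ℝ] B₂) (q₂ : B₂ →ₗ[ℝ] C₂)
    (p₃ : A₃ →ₗ[ℝ] B₃) (q₃ : B₃ →ₗ[ℝ] C₃)
    -- exactness of the rows
    (hfB : Function.Injective fB)
    (hexB : LinearMap.range fB = LinearMap.ker gB)
    (hfC : Function.Injective fC)
    (hexC : LinearMap.range fC = LinearMap.ker gC)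
    -- exactness of the columns
    (hp₂ : Function.Injective p₂)
    (hex₂ : LinearMap.range p₂ = LinearMap.ker q₂)
    (hp₃ : Function.Injective p₃)
    (hex₃ : LinearMap.range p₃ = LinearMap.ker q₃)
    -- commutativity of the four squares
    (hsq₁ : p₂ ∘ₗ fA = fB ∘ₗ p₁) (hsq₂ : p₃ ∘ₗ gA = gB ∘ₗ p₂)
    (hsq₃ : q₂ ∘ₗ fB = fC ∘ₗ q₁) (hsq₄ : q₃ ∘ₗ gB = gC ∘ₗ q₂)
    -- chosen bases
    {ιa₁ ιa₃ ιc₁ ιc₃ : Type}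
    [Fintype ιa₁] [Fintype ιa₃] [Fintype ιc₁] [Fintype ιc₃]
    [DecidableEq ιa₁] [DecidableEq ιa₃] [DecidableEq ιc₁] [DecidableEq ιc₃]
    (bA₁ : Module.Basis ιa₁ ℝ A₁) (bA₂ : Module.Basis (ιa₁ ⊕ ιa₃) ℝ A₂) (bA₃ : Module.Basis ιa₃ ℝ A₃)
    (bC₁ : Module.Basis ιc₁ ℝ C₁) (bC₂ : Module.Basis (ιc₁ ⊕ ιc₃) ℝ C₂) (bC₃ : Module.Basis ιc₃ ℝ C₃)
    (bB₁ : Module.Basis (ιa₁ ⊕ ιc₁) ℝ B₁) (bB₃ : Module.Basis (ιa₃ ⊕ ιc₃) ℝ B₃)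
    (bB₂ : Module.Basis ((ιa₁ ⊕ ιa₃) ⊕ (ιc₁ ⊕ ιc₃)) ℝ B₂)
    -- chosen sections of the six surjections
    (sA : A₃ →ₗ[ℝ] A₂) (hsA : gA ∘ₗ sA = LinearMap.id)
    (sB : B₃ →ₗ[ℝ] B₂) (hsB : gB ∘ₗ sB = LinearMap.id)
    (sC : C₃ →ₗ[ℝ] C₂) (hsC : gC ∘ₗ sC = LinearMap.id)
    (s₁ : C₁ →ₗ[ℝ] B₁) (hs₁ : q₁ ∘ₗ s₁ = LinearMap.id)
    (s₂ : C₂ →ₗ[ℝ] B₂) (hs₂ : q₂ ∘ₗ s₂ = LinearMap.id)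
    (s₃ : C₃ →ₗ[ℝ] B₃) (hs₃ : q₃ ∘ₗ s₃ = LinearMap.id) :
    |(LinearMap.toMatrix (bA₂.prod bC₂) bB₂ (p₂.coprod s₂)).det| *
      |(LinearMap.toMatrix (bA₁.prod bA₃) bA₂ (fA.coprod sA)).det| *
      |(LinearMap.toMatrix (bC₁.prod bC₃) bC₂ (fC.coprod sC)).det| =
    |(LinearMap.toMatrix (bA₁.prod bC₁) bB₁ (p₁.coprod s₁)).det| *
      |(LinearMap.toMatrix (bA₃.prod bC₃) bB₃ (p₃.coprod s₃)).det| *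
      |(LinearMap.toMatrix (bB₁.prod bB₃)
          (bB₂.reindex (Equiv.sumSumSumComm ιa₁ ιa₃ ιc₁ ιc₃)) (fB.coprod sB)).det| := by
  have exB : Function.Exact fB gB := LinearMap.exact_iff.mpr hexB.symm
  obtain ⟨s₂', sB', hs₂', hsB', hcomm⟩ := exists_sections_comp_prodMap_eq hsq₁ hsq₂ hsq₃ hsq₄
    exB.linearMap_comp_eq_zero (LinearMap.exact_iff.mpr hexC.symm) hfC
    (LinearMap.exact_iff.mpr hex₃.symm) hp₃ hsA hsB hsC hs₁ hs₃
  have key :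
      (toMatrix (bA₂.prod bC₂) bB₂ (p₂.coprod s₂)).det *
        (toMatrix (bA₁.prod bA₃) bA₂ (fA.coprod sA)).det *
        (toMatrix (bC₁.prod bC₃) bC₂ (fC.coprod sC)).det =
      (toMatrix (bA₁.prod bC₁) bB₁ (p₁.coprod s₁)).det *
        (toMatrix (bA₃.prod bC₃) bB₃ (p₃.coprod s₃)).det *
        (toMatrix (bB₁.prod bB₃) (bB₂.reindex (Equiv.sumSumSumComm ιa₁ ιa₃ ιc₁ ιc₃))
          (fB.coprod sB)).det := by
    rw [det_toMatrix_coprod_eq_of_section bA₂ bC₂ bB₂ (LinearMap.exact_iff.mpr hex₂.symm) hp₂ hs₂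
        hs₂', det_toMatrix_coprod_eq_of_section bB₁ bB₃ _ exB hfB hsB hsB', mul_assoc,
      ← det_toMatrix_comp_prodMap, hcomm, ← LinearMap.comp_assoc,
      det_toMatrix_comp_prodProdProdComm, det_toMatrix_comp_prodMap, mul_comm]
  simpa only [abs_mul] using congrArg abs key

/-- For a commutative `3 × 3` diagram of finite-dimensional real vector
spaces with exact rows `(E_A), (E_B), (E_C)` and exact columns `(E₁), (E₂), (E₃)`,
chosen bases of the nine spaces and chosen sections of the six surjections, one has
`|det θ(E₂)| ⬝ |det θ(E_A)| ⬝ |det θ(E_C)| = |det θ(E₁)| ⬝ |det θ(E₃)| ⬝ |det θ(E_B)|`.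
(The basis of `B₂` used for the row `(E_B)` is the chosen one, with its index set
re-identified along the canonical bijection
`(ιa₁ ⊕ ιa₃) ⊕ (ιc₁ ⊕ ιc₃) ≃ (ιa₁ ⊕ ιc₁) ⊕ (ιa₃ ⊕ ιc₃)`.) -/
theorem stmt_6 {A₁ A₂ A₃ B₁ B₂ B₃ C₁ C₂ C₃ : Type}
    [AddCommGroup A₁] [AddCommGroup A₂] [AddCommGroup A₃]
    [AddCommGroup B₁] [AddCommGroup B₂] [AddCommGroup B₃]
    [AddCommGroup C₁] [AddCommGroup C₂] [AddCommGroup C₃]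
    [Module ℝ A₁] [Module ℝ A₂] [Module ℝ A₃]
    [Module ℝ B₁] [Module ℝ B₂] [Module ℝ B₃]
    [Module ℝ C₁] [Module ℝ C₂] [Module ℝ C₃]
    [FiniteDimensional ℝ A₁] [FiniteDimensional ℝ A₂] [FiniteDimensional ℝ A₃]
    [FiniteDimensional ℝ B₁] [FiniteDimensional ℝ B₂] [FiniteDimensional ℝ B₃]
    [FiniteDimensional ℝ C₁] [FiniteDimensional ℝ C₂] [FiniteDimensional ℝ C₃]
    -- rows
    (fA : A₁ →ₗ[ℝ] A₂) (gA : A₂ →ₗ[ℝ] A₃)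
    (fB : B₁ →ₗ[ℝ] B₂) (gB : B₂ →ₗ[ℝ] B₃)
    (fC : C₁ →ₗ[ℝ] C₂) (gC : C₂ →ₗ[ℝ] C₃)
    -- columns
    (p₁ : A₁ →ₗ[ℝ] B₁) (q₁ : B₁ →ₗ[ℝ] C₁)
    (p₂ : A₂ →ₗ[ℝ] B₂) (q₂ : B₂ →ₗ[ℝ] C₂)
    (p₃ : A₃ →ₗ[ℝ] B₃) (q₃ : B₃ →ₗ[ℝ] C₃)
    -- exactness of the rows
    (hfA : Function.Injective fA) (hgA : Function.Surjective gA)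
    (hexA : LinearMap.range fA = LinearMap.ker gA)
    (hfB : Function.Injective fB) (hgB : Function.Surjective gB)
    (hexB : LinearMap.range fB = LinearMap.ker gB)
    (hfC : Function.Injective fC) (hgC : Function.Surjective gC)
    (hexC : LinearMap.range fC = LinearMap.ker gC)
    -- exactness of the columns
    (hp₁ : Function.Injective p₁) (hq₁ : Function.Surjective q₁)
    (hex₁ : LinearMap.range p₁ = LinearMap.ker q₁)
    (hp₂ : Function.Injective p₂) (hq₂ : Function.Surjective q₂)
    (hex₂ : LinearMap.range p₂ = LinearMap.ker q₂)
    (hp₃ : Function.Injective p₃) (hq₃ : Function.Surjective q₃)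
    (hex₃ : LinearMap.range p₃ = LinearMap.ker q₃)
    -- commutativity of the four squares
    (hsq₁ : p₂ ∘ₗ fA = fB ∘ₗ p₁) (hsq₂ : p₃ ∘ₗ gA = gB ∘ₗ p₂)
    (hsq₃ : q₂ ∘ₗ fB = fC ∘ₗ q₁) (hsq₄ : q₃ ∘ₗ gB = gC ∘ₗ q₂)
    -- chosen bases
    {ιa₁ ιa₃ ιc₁ ιc₃ : Type}
    [Fintype ιa₁] [Fintype ιa₃] [Fintype ιc₁] [Fintype ιc₃]
    [DecidableEq ιa₁] [DecidableEq ιa₃] [DecidableEq ιc₁] [DecidableEq ιc₃]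
    (bA₁ : Module.Basis ιa₁ ℝ A₁) (bA₂ : Module.Basis (ιa₁ ⊕ ιa₃) ℝ A₂) (bA₃ : Module.Basis ιa₃ ℝ A₃)
    (bC₁ : Module.Basis ιc₁ ℝ C₁) (bC₂ : Module.Basis (ιc₁ ⊕ ιc₃) ℝ C₂) (bC₃ : Module.Basis ιc₃ ℝ C₃)
    (bB₁ : Module.Basis (ιa₁ ⊕ ιc₁) ℝ B₁) (bB₃ : Module.Basis (ιa₃ ⊕ ιc₃) ℝ B₃)
    (bB₂ : Module.Basis ((ιa₁ ⊕ ιa₃) ⊕ (ιc₁ ⊕ ιc₃)) ℝ B₂)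
    -- chosen sections of the six surjections
    (sA : A₃ →ₗ[ℝ] A₂) (hsA : gA ∘ₗ sA = LinearMap.id)
    (sB : B₃ →ₗ[ℝ] B₂) (hsB : gB ∘ₗ sB = LinearMap.id)
    (sC : C₃ →ₗ[ℝ] C₂) (hsC : gC ∘ₗ sC = LinearMap.id)
    (s₁ : C₁ →ₗ[ℝ] B₁) (hs₁ : q₁ ∘ₗ s₁ = LinearMap.id)
    (s₂ : C₂ →ₗ[ℝ] B₂) (hs₂ : q₂ ∘ₗ s₂ = LinearMap.id)
    (s₃ : C₃ →ₗ[ℝ] B₃) (hs₃ : q₃ ∘ₗ s₃ = LinearMap.id) :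
    |(LinearMap.toMatrix (bA₂.prod bC₂) bB₂ (p₂.coprod s₂)).det| *
      |(LinearMap.toMatrix (bA₁.prod bA₃) bA₂ (fA.coprod sA)).det| *
      |(LinearMap.toMatrix (bC₁.prod bC₃) bC₂ (fC.coprod sC)).det| =
    |(LinearMap.toMatrix (bA₁.prod bC₁) bB₁ (p₁.coprod s₁)).det| *
      |(LinearMap.toMatrix (bA₃.prod bC₃) bB₃ (p₃.coprod s₃)).det| *
      |(LinearMap.toMatrix (bB₁.prod bB₃)
          (bB₂.reindex (Equiv.sumSumSumComm ιa₁ ιa₃ ιc₁ ιc₃)) (fB.coprod sB)).det| :=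
  stmt_6_general fA gA fB gB fC gC p₁ q₁ p₂ q₂ p₃ q₃ hfB hexB hfC hexC hp₂ hex₂ hp₃ hex₃ hsq₁ hsq₂
    hsq₃ hsq₄ bA₁ bA₂ bA₃ bC₁ bC₂ bC₃ bB₁ bB₃ bB₂ sA hsA sB hsB sC hsC s₁ hs₁ s₂ hs₂ s₃ hs₃
end

section
/- Let L = ℚ(ζ₁₂) and K = ℚ(i) ⊆ L where i = ζ³. The norm map N_{L/K} : O_L^× → O_K^× on unit groups is surjective: every unit of ℤ[i] (i.e. every element of {1, i, −1, −i}) is the norm of a unit of O_L. Equivalently, the Tate cohomology group Ĥ⁰(Gal(L/K), O_L^×) = O_K^× / N_{L/K}(O_L^×) is trivial. -/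
/-!
Since `φ 4 = 2`, `K = ℚ(i)` has a single (complex) infinite place, so its unit rank is `0` and
every unit of `ℤ[i]` is a root of unity in `ℚ(i)`, i.e. a power of `i`. It therefore suffices to
find a unit of `O_L` of norm `i`. From `Φ₁₂(ζ) = ζ⁴ - ζ² + 1 = 0` one gets
`(1 + ζ)(ζ² - ζ³) = 1`, so `1 + ζ` is a unit, and `1 + ζ` is a root of `X² - (2 + i) X + i`.
As `[L : K] = 2` and `ζ ∉ K`, this is its minimal polynomial over `K`, so `N_{L/K}(1 + ζ) = i`.
-/

open NumberField IntermediateField Polynomial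

namespace NumberField.Units

variable {K : Type*} [Field K] [NumberField K]

theorem mem_torsion_of_rank_eq_zero (h : rank K = 0) (u : (𝓞 K)ˣ) : u ∈ torsion K := by
  have hempty : Set.range (fundSystem K) = ∅ := by
    rw [Set.range_eq_empty_iff, h]
    infer_instance
  have htop := closure_fundSystem_sup_torsion_eq_top K
  rw [hempty, Subgroup.closure_empty, bot_sup_eq] at htop
  exact htop ▸ Subgroup.mem_top u

theorem rank_eq_zero_of_totient_eq_two {n : ℕ} [NeZero n] [IsCyclotomicExtension {n} ℚ K]
    (hn : n.totient = 2) : rank K = 0 := by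
  have hdeg := InfinitePlace.card_add_two_mul_card_eq_rank K
  rw [IsCyclotomicExtension.Rat.nrComplexPlaces_eq_totient_div_two n,
    IsCyclotomicExtension.Rat.finrank n K, hn] at hdeg
  rw [rank, InfinitePlace.card_eq_nrRealPlaces_add_nrComplexPlaces,
    IsCyclotomicExtension.Rat.nrComplexPlaces_eq_totient_div_two n, hn]
  omega

theorem exists_pow_eq_of_mem_torsion {n : ℕ} [NeZero n] [IsCyclotomicExtension {n} ℚ K]
    (hn : Even n) {ζ : K} (hζ : IsPrimitiveRoot ζ n) {u : (𝓞 K)ˣ} (hu : u ∈ torsion K) :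
    ∃ k : ℕ, (u : K) = ζ ^ k := by
  have hun : (⟨u, hu⟩ : torsion K) ^ n = 1 := by
    have := pow_card_eq_one' (G := torsion K) (x := ⟨u, hu⟩)
    rwa [← torsionOrder, IsCyclotomicExtension.Rat.torsionOrder_eq (n := n), if_pos hn] at this
  have hun' : (u : K) ^ n = 1 := by
    simpa using congrArg (fun x : torsion K ↦ ((x : (𝓞 K)ˣ) : K)) hun
  obtain ⟨k, -, hk⟩ := hζ.eq_pow_of_pow_eq_one hun'
  exact ⟨k, hk.symm⟩

theorem exists_pow_eq_of_totient_eq_two {n : ℕ} [NeZero n] [IsCyclotomicExtension {n} ℚ K]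
    (hn : Even n) (hφ : n.totient = 2) {ζ : K} (hζ : IsPrimitiveRoot ζ n) (u : (𝓞 K)ˣ) :
    ∃ k : ℕ, (u : K) = ζ ^ k :=
  exists_pow_eq_of_mem_torsion hn hζ <|
    mem_torsion_of_rank_eq_zero (rank_eq_zero_of_totient_eq_two hφ) u

end NumberField.Units

theorem Algebra.norm_eq_of_finrank_eq_two {K L : Type*} [Field K] [Field L] [Algebra K L]
    (h2 : Module.finrank K L = 2) {x : L} (hx : x ∉ Set.range (algebraMap K L)) {b c : K}
    (hroot : x ^ 2 + algebraMap K L b * x + algebraMap K L c = 0) :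
    Algebra.norm K x = c := by
  have : FiniteDimensional K L := Module.finite_of_finrank_eq_succ h2
  have hint : IsIntegral K x := .of_finite K x
  have hp_deg : (X ^ 2 + C b * X + C c : K[X]).natDegree = 2 := by compute_degree!
  have hp_monic : (X ^ 2 + C b * X + C c : K[X]).Monic := by monicity!
  have hmin_deg : (minpoly K x).natDegree = 2 := by
    have hle := h2 ▸ minpoly.natDegree_le (A := K) x
    have hne : (minpoly K x).natDegree ≠ 1 := mt minpoly.natDegree_eq_one_iff.mp hx
    have hpos := minpoly.natDegree_pos hint
    omega
  have hmin : minpoly K x = X ^ 2 + C b * X + C c := by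
    refine eq_of_dvd_of_natDegree_le_of_leadingCoeff (minpoly.dvd K x ?_) (by omega)
      (by rw [(minpoly.monic hint).leadingCoeff, hp_monic.leadingCoeff])
    simpa using hroot
  have hgen : Module.finrank K⟮x⟯ L = 1 := by
    have htower := Module.finrank_mul_finrank K K⟮x⟯ L
    rw [IntermediateField.adjoin.finrank hint, hmin_deg, h2] at htower
    omega
  have hnorm : norm K (AdjoinSimple.gen K x) = c := by
    rw [← IntermediateField.adjoin.powerBasis_gen hint, PowerBasis.norm_gen_eq_coeff_zero_minpoly,
      IntermediateField.adjoin.powerBasis_gen, minpoly_gen, IntermediateField.adjoin.powerBasis_dim,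
      hmin_deg, hmin]
    simp
  rw [norm_eq_norm_adjoin, hgen, pow_one, hnorm]

namespace IsPrimitiveRoot

section CommRing

variable {R : Type*} [CommRing R] [IsDomain R] {ζ : R}

theorem pow_four_eq_sq_sub_one (hζ : IsPrimitiveRoot ζ 12) : ζ ^ 4 = ζ ^ 2 - 1 := by
  have h6 : ζ ^ 6 = -1 := (hζ.pow (by norm_num) (by norm_num : 12 = 6 * 2)).eq_neg_one_of_two_right
  have h4 : ζ ^ 4 ≠ 1 := hζ.pow_ne_one_of_pos_of_lt (by norm_num) (by norm_num)
  have h2 : ζ ^ 2 + 1 ≠ 0 := fun h ↦ h4 (by linear_combination (ζ ^ 2 - 1) * h)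
  have hfac : (ζ ^ 2 + 1) * (ζ ^ 4 - ζ ^ 2 + 1) = 0 := by linear_combination h6
  linear_combination (mul_eq_zero.mp hfac).resolve_left h2

theorem isUnit_one_add (hζ : IsPrimitiveRoot ζ 12) : IsUnit (1 + ζ) :=
  IsUnit.of_mul_eq_one (ζ ^ 2 - ζ ^ 3) (by linear_combination -hζ.pow_four_eq_sq_sub_one)

end CommRing

variable {L : Type*} [Field L] [NumberField L] {ζ : L}

theorem isCyclotomicExtension_adjoin_pow_three (hζ : IsPrimitiveRoot ζ 12) :
    IsCyclotomicExtension {4} ℚ ℚ⟮ζ ^ 3⟯ :=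
  (hζ.pow (by norm_num) (by norm_num) : IsPrimitiveRoot (ζ ^ 3) 4)
    |>.intermediateField_adjoin_isCyclotomicExtension ℚ

theorem finrank_adjoin_pow_three (hζ : IsPrimitiveRoot ζ 12) :
    Module.finrank ℚ ℚ⟮ζ ^ 3⟯ = 2 := by
  have := hζ.isCyclotomicExtension_adjoin_pow_three
  rw [IsCyclotomicExtension.Rat.finrank 4]
  decide

theorem notMem_adjoin_pow_three (hζ : IsPrimitiveRoot ζ 12) : ζ ∉ ℚ⟮ζ ^ 3⟯ := by
  intro hmem
  have hle : (minpoly ℚ ζ).natDegree ≤ 2 := by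
    rw [← IntermediateField.minpoly_eq ⟨ζ, hmem⟩, ← hζ.finrank_adjoin_pow_three]
    exact minpoly.natDegree_le _
  rw [← cyclotomic_eq_minpoly_rat hζ (by norm_num), natDegree_cyclotomic] at hle
  exact absurd hle (by decide)

theorem finrank_over_adjoin_pow_three [IsCyclotomicExtension {12} ℚ L]
    (hζ : IsPrimitiveRoot ζ 12) : Module.finrank ℚ⟮ζ ^ 3⟯ L = 2 := by
  have htower := Module.finrank_mul_finrank ℚ ℚ⟮ζ ^ 3⟯ L
  rw [hζ.finrank_adjoin_pow_three, IsCyclotomicExtension.Rat.finrank 12 L,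
    (by decide : Nat.totient 12 = 4)] at htower
  omega

theorem norm_one_add [IsCyclotomicExtension {12} ℚ L] (hζ : IsPrimitiveRoot ζ 12) :
    Algebra.norm ℚ⟮ζ ^ 3⟯ (1 + ζ) = AdjoinSimple.gen ℚ (ζ ^ 3) := by
  have hgen : algebraMap ℚ⟮ζ ^ 3⟯ L (AdjoinSimple.gen ℚ (ζ ^ 3)) = ζ ^ 3 :=
    AdjoinSimple.algebraMap_gen ℚ (ζ ^ 3)
  refine Algebra.norm_eq_of_finrank_eq_two hζ.finrank_over_adjoin_pow_three ?_
    (b := -(2 + AdjoinSimple.gen ℚ (ζ ^ 3))) ?_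
  · rintro ⟨y, hy⟩
    refine hζ.notMem_adjoin_pow_three ?_
    have hmem : 1 + ζ ∈ ℚ⟮ζ ^ 3⟯ := hy ▸ y.2
    simpa using sub_mem hmem (one_mem _)
  · rw [map_neg, map_add, map_ofNat, hgen]
    linear_combination -hζ.pow_four_eq_sq_sub_one

end IsPrimitiveRoot

/-- Let `L = ℚ(ζ₁₂)` and `K = ℚ(i) ⊆ L` where `i = ζ³`. The norm map
`N_{L/K} : O_L^× → O_K^×` is surjective: every unit of `O_K = ℤ[i]` is the norm of a unit
of `O_L`. Equivalently, `Ĥ⁰(Gal(L/K), O_L^×) = O_K^× / N_{L/K}(O_L^×)` is trivial. -/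
theorem stmt_12 (L : Type) [Field L] [NumberField L] [IsCyclotomicExtension {12} ℚ L]
    (ζ : L) (hζ : IsPrimitiveRoot ζ 12) :
    ∀ v : (𝓞 ℚ⟮ζ ^ 3⟯)ˣ, ∃ u : (𝓞 L)ˣ,
      Algebra.norm ℚ⟮ζ ^ 3⟯ (algebraMap (𝓞 L) L u : L) =
        (algebraMap (𝓞 ℚ⟮ζ ^ 3⟯) ℚ⟮ζ ^ 3⟯ v : ℚ⟮ζ ^ 3⟯) := by
  intro v
  have := hζ.isCyclotomicExtension_adjoin_pow_three
  have hi : IsPrimitiveRoot (AdjoinSimple.gen ℚ (ζ ^ 3)) 4 :=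
    IsPrimitiveRoot.coe_submonoidClass_iff.mp (hζ.pow (by norm_num) (by norm_num))
  obtain ⟨k, hk⟩ := Units.exists_pow_eq_of_totient_eq_two (by decide) (by decide) hi v
  refine ⟨hζ.toInteger_isPrimitiveRoot.isUnit_one_add.unit ^ k, ?_⟩
  have hcoe : algebraMap (𝓞 L) L hζ.toInteger = ζ := rfl
  simp [hcoe, hζ.norm_one_add, hk]
end
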